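/- Let n ≥ 1 and N ≥ 1, let Y ∈ ℝⁿ, let X be a real n × N matrix, let α ∈ ℝᴺ, and let ρ ≥ 0. Then the worst-case residual norm over all bounded perturbations of the data, sup { ‖(Y + ΔY) − (X + ΔX)α‖₂ : ΔY ∈ ℝⁿ with ‖ΔY‖₂ ≤ ρ, ΔX a real n × N matrix with ‖ΔX‖ ≤ ρ }, is equal to ‖Y − Xα‖₂ + ρ‖α‖₂ + ρ. -/

import Mathlib

/-!
The triangle inequality bounds the perturbed residual `r + ΔY - ΔX α` (with `r = Y - X α`) by
`‖r‖ + ρ‖α‖ + ρ`. The bound is attained by pushing both perturbations along a unit vector `u`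
with `r = ‖r‖ u`: take `ΔY = ρ u` and `ΔX = -ρ u gᵀ`, where `g` is a norming functional of `α`
(Hahn–Banach: `‖g‖ ≤ 1`, `g α = ‖α‖`). Then the residual is `(‖r‖ + ρ‖α‖ + ρ) u`.
-/

noncomputable def matOpNorm {n N : ℕ} (M : Matrix (Fin n) (Fin N) ℝ) : ℝ :=
  ‖LinearMap.toContinuousLinearMap (Matrix.toEuclideanLin M)‖

section

variable {E F : Type*} [NormedAddCommGroup E] [NormedSpace ℝ E]
  [NormedAddCommGroup F] [NormedSpace ℝ F]

theorem exists_norm_eq_one_and_eq_norm_smul [Nontrivial F] (y : F) :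
    ∃ u : F, ‖u‖ = 1 ∧ y = ‖y‖ • u := by
  by_cases hy : y = 0
  · obtain ⟨u, hu⟩ := exists_norm_eq F zero_le_one
    exact ⟨u, hu, by simp [hy]⟩
  · have hy' : ‖y‖ ≠ 0 := norm_ne_zero_iff.mpr hy
    refine ⟨‖y‖⁻¹ • y, ?_, ?_⟩
    · rw [norm_smul, norm_inv, norm_norm, inv_mul_cancel₀ hy']
    · rw [smul_smul, mul_inv_cancel₀ hy', one_smul]

theorem norm_add_sub_apply_le_of_norm_le {r d : F} {T : E →L[ℝ] F} {a : E} {ρ : ℝ}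
    (hd : ‖d‖ ≤ ρ) (hT : ‖T‖ ≤ ρ) :
    ‖r + d - T a‖ ≤ ‖r‖ + ρ * ‖a‖ + ρ :=
  calc ‖r + d - T a‖ ≤ ‖r‖ + ‖d‖ + ‖T a‖ := norm_sub_le_of_le (norm_add_le r d) le_rfl
    _ ≤ ‖r‖ + ρ + ρ * ‖a‖ := by
        gcongr
        exact T.le_of_opNorm_le hT a
    _ = ‖r‖ + ρ * ‖a‖ + ρ := by ring

theorem exists_norm_add_sub_apply_eq [Nontrivial F] (r : F) (a : E) {ρ : ℝ} (hρ : 0 ≤ ρ) :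
    ∃ (d : F) (T : E →L[ℝ] F), ‖d‖ ≤ ρ ∧ ‖T‖ ≤ ρ ∧ ‖r + d - T a‖ = ‖r‖ + ρ * ‖a‖ + ρ := by
  obtain ⟨u, hu, hru⟩ := exists_norm_eq_one_and_eq_norm_smul r
  obtain ⟨g, hg, hga⟩ := exists_dual_vector'' ℝ a
  refine ⟨ρ • u, -ρ • g.smulRight u, ?_, ?_, ?_⟩
  · rw [norm_smul, hu, Real.norm_of_nonneg hρ, mul_one]
  · calc ‖-ρ • g.smulRight u‖ = ρ * ‖g‖ := by
          rw [norm_smul, ContinuousLinearMap.norm_smulRight_apply, hu, norm_neg,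
            Real.norm_of_nonneg hρ, mul_one]
      _ ≤ ρ := mul_le_of_le_one_right hρ hg
  · have hres : r + ρ • u - (-ρ • g.smulRight u) a = (‖r‖ + ρ * ‖a‖ + ρ) • u := by
      rw [smul_apply, ContinuousLinearMap.smulRight_apply, hga]
      conv_lhs => rw [hru]
      module
    rw [hres, norm_smul, hu, mul_one, Real.norm_of_nonneg (by positivity)]

end

theorem robust_residual_sup_general {n N : ℕ} (hn : 1 ≤ n)
    (Y : EuclideanSpace ℝ (Fin n)) (X : Matrix (Fin n) (Fin N) ℝ)
    (α : EuclideanSpace ℝ (Fin N)) (ρ : ℝ) (hρ : 0 ≤ ρ) :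
    sSup { r : ℝ | ∃ (ΔY : EuclideanSpace ℝ (Fin n)) (ΔX : Matrix (Fin n) (Fin N) ℝ),
        ‖ΔY‖ ≤ ρ ∧ matOpNorm ΔX ≤ ρ ∧
        r = ‖(Y + ΔY) - Matrix.toEuclideanLin (X + ΔX) α‖ }
      = ‖Y - Matrix.toEuclideanLin X α‖ + ρ * ‖α‖ + ρ := by
  have : Nonempty (Fin n) := ⟨⟨0, hn⟩⟩
  have hsplit : ∀ ΔY ΔX, (Y + ΔY) - Matrix.toEuclideanLin (X + ΔX) α
      = (Y - Matrix.toEuclideanLin X α) + ΔY - Matrix.toEuclideanLin ΔX α := by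
    intro ΔY ΔX
    rw [map_add, LinearMap.add_apply]
    abel
  refine IsGreatest.csSup_eq ⟨?_, ?_⟩
  · obtain ⟨d, T, hd, hT, hdT⟩ :=
      exists_norm_add_sub_apply_eq (Y - Matrix.toEuclideanLin X α) α hρ
    refine ⟨d, Matrix.toEuclideanLin.symm T, hd, ?_, ?_⟩
    · rwa [matOpNorm, LinearEquiv.apply_symm_apply]
    · rw [hsplit, LinearEquiv.apply_symm_apply]
      exact hdT.symm
  · rintro _ ⟨ΔY, ΔX, hΔY, hΔX, rfl⟩
    rw [hsplit]
    exact norm_add_sub_apply_le_of_norm_le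
      (T := LinearMap.toContinuousLinearMap (Matrix.toEuclideanLin ΔX)) hΔY hΔX

/-- The worst-case residual norm over all bounded perturbations of the data equals
`‖Y − Xα‖₂ + ρ‖α‖₂ + ρ`. -/
theorem robust_residual_sup {n N : ℕ} (hn : 1 ≤ n) (hN : 1 ≤ N)
    (Y : EuclideanSpace ℝ (Fin n)) (X : Matrix (Fin n) (Fin N) ℝ)
    (α : EuclideanSpace ℝ (Fin N)) (ρ : ℝ) (hρ : 0 ≤ ρ) :
    sSup { r : ℝ | ∃ (ΔY : EuclideanSpace ℝ (Fin n)) (ΔX : Matrix (Fin n) (Fin N) ℝ),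
        ‖ΔY‖ ≤ ρ ∧ matOpNorm ΔX ≤ ρ ∧
        r = ‖(Y + ΔY) - Matrix.toEuclideanLin (X + ΔX) α‖ }
      = ‖Y - Matrix.toEuclideanLin X α‖ + ρ * ‖α‖ + ρ :=
  robust_residual_sup_general hn Y X α ρ hρ
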